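/- arXiv:2209.14740 — 6 statements merged into one kernel-verified Lean document; each statement's English description precedes it below -/
import Mathlib

section
/- Suppose β > 0, B = 0, L is positive definite (not merely semidefinite), and M is invertible. Then every element σ of the spectrum of the complex matrix A M⁻¹ satisfies |σ - 1/2| = 1/2, i.e., all eigenvalues of A M⁻¹ lie on the circle of radius 1/2 centered at 1/2. -/
open Matrix

lemma aux_dot_pos {n : ℕ} (P : Matrix (Fin n) (Fin n) ℝ) (hP : P.PosDef)
    (x : Fin n → ℂ) (hx : x ≠ 0) :
    ∃ r : ℝ, 0 < r ∧ star x ⬝ᵥ (P.map Complex.ofReal) *ᵥ x = (r : ℂ) := by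
  classical
  set a : Fin n → ℝ := fun i => (x i).re with ha
  set b : Fin n → ℝ := fun i => (x i).im with hb
  have hsym : ∀ i j, P j i = P i j := fun i j => hP.1.apply i j
  refine ⟨a ⬝ᵥ P *ᵥ a + b ⬝ᵥ P *ᵥ b, ?_, ?_⟩
  · have hab : a ≠ 0 ∨ b ≠ 0 := by
      by_contra h
      push_neg at h
      apply hx
      funext i
      have h1 := congrFun h.1 i
      have h2 := congrFun h.2 i
      simp [ha, hb] at h1 h2
      exact Complex.ext h1 h2
    have nna : 0 ≤ a ⬝ᵥ P *ᵥ a := by simpa using hP.posSemidef.dotProduct_mulVec_nonneg a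
    have nnb : 0 ≤ b ⬝ᵥ P *ᵥ b := by simpa using hP.posSemidef.dotProduct_mulVec_nonneg b
    rcases hab with h | h
    · have := hP.dotProduct_mulVec_pos h; simp only [star_trivial] at this; linarith
    · have := hP.dotProduct_mulVec_pos h; simp only [star_trivial] at this; linarith
  · have key : star x ⬝ᵥ (P.map Complex.ofReal) *ᵥ x
        = ∑ i, ∑ j, (P i j : ℂ) * (starRingEnd ℂ (x i) * x j) := by
      simp only [dotProduct, mulVec, map_apply, Pi.star_apply, Finset.mul_sum]
      refine Finset.sum_congr rfl fun i _ => Finset.sum_congr rfl fun j _ => ?_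
      simp [Complex.star_def]; ring
    rw [key]
    apply Complex.ext
    · simp only [Complex.re_sum, Complex.ofReal_re]
      have : ∀ i j : Fin n, ((P i j : ℂ) * (starRingEnd ℂ (x i) * x j)).re
          = P i j * (a i * a j) + P i j * (b i * b j) := by
        intro i j
        simp only [Complex.mul_re, Complex.mul_im, Complex.ofReal_re,
          Complex.ofReal_im, Complex.conj_re, Complex.conj_im, ha, hb]
        ring
      simp only [this, Finset.sum_add_distrib]
      simp [dotProduct, mulVec, Finset.mul_sum, mul_comm, mul_left_comm]
    · simp only [Complex.im_sum, Complex.ofReal_im]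
      have hf : ∀ i j : Fin n, ((P i j : ℂ) * (starRingEnd ℂ (x i) * x j)).im
          = P i j * (a i * b j - b i * a j) := by
        intro i j
        simp only [Complex.mul_re, Complex.mul_im, Complex.ofReal_re,
          Complex.ofReal_im, Complex.conj_re, Complex.conj_im, ha, hb]
        ring
      simp only [hf]
      have h1 : (∑ i, ∑ j, P i j * (a i * b j - b i * a j))
          = ∑ i, ∑ j, P j i * (a j * b i - b j * a i) := Finset.sum_comm
      have h2 : ∀ i j : Fin n, P j i * (a j * b i - b j * a i)
          = -(P i j * (a i * b j - b i * a j)) := by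
        intro i j; rw [hsym i j]; ring
      have h3 : (∑ i, ∑ j, P j i * (a j * b i - b j * a i))
          = -∑ i, ∑ j, P i j * (a i * b j - b i * a j) := by
        rw [← Finset.sum_neg_distrib]
        refine Finset.sum_congr rfl fun i _ => ?_
        rw [← Finset.sum_neg_distrib]
        exact Finset.sum_congr rfl fun j _ => h2 i j
      linarith [h1.trans h3]
/-- **CSL preconditioner, Dirichlet boundary conditions.**
With `A = L - iB - K` and `M = L - iB - (1+iβ)K`, where `B = 0`, `L` and `K` are real
symmetric positive definite, `β > 0` and `M` invertible, every element of the spectrum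
of `A * M⁻¹` lies on the circle of radius `1/2` centered at `1/2`. -/
theorem spectrum_csl_dirichlet_on_circle {n : ℕ}
    (L B K : Matrix (Fin n) (Fin n) ℝ)
    (hL : L.PosDef) (hB : B = 0) (hK : K.PosDef)
    (β : ℝ) (hβ : 0 < β)
    (A M : Matrix (Fin n) (Fin n) ℂ)
    (hA : A = L.map Complex.ofReal - Complex.I • B.map Complex.ofReal
              - K.map Complex.ofReal)
    (hM : M = L.map Complex.ofReal - Complex.I • B.map Complex.ofReal
              - ((1 : ℂ) + Complex.I * (β : ℂ)) • K.map Complex.ofReal)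
    (hMinv : IsUnit M) :
    ∀ σ ∈ spectrum ℂ (A * M⁻¹), ‖σ - 1/2‖ = 1/2 := by
  subst hB
  simp only [Matrix.map_zero Complex.ofReal Complex.ofReal_zero, smul_zero, sub_zero] at hA hM
  intro σ hσ
  rw [spectrum.mem_iff] at hσ
  have hdetM : IsUnit M.det := (Matrix.isUnit_iff_isUnit_det M).mp hMinv
  -- rewrite the non-unit as (σ • M - A) * M⁻¹
  have hfac : algebraMap ℂ (Matrix (Fin n) (Fin n) ℂ) σ - A * M⁻¹
      = (σ • M - A) * M⁻¹ := by
    rw [Matrix.sub_mul, Matrix.smul_mul, Matrix.mul_nonsing_inv M hdetM]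
    congr 1
    rw [Algebra.algebraMap_eq_smul_one]
  rw [hfac] at hσ
  have hMinvUnit : IsUnit M⁻¹ :=
    (Matrix.isUnit_iff_isUnit_det M⁻¹).mpr (Matrix.isUnit_nonsing_inv_det M hdetM)
  have hnotunit : ¬ IsUnit (σ • M - A) := fun h => hσ (h.mul hMinvUnit)
  have hdet0 : (σ • M - A).det = 0 := by
    by_contra hne
    exact hnotunit ((Matrix.isUnit_iff_isUnit_det _).mpr (isUnit_iff_ne_zero.mpr hne))
  obtain ⟨x, hx, hxeq⟩ := (Matrix.exists_mulVec_eq_zero_iff).mpr hdet0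
  -- the key scalar identity
  obtain ⟨p, hp, hpe⟩ := aux_dot_pos L hL x hx
  obtain ⟨q, hq, hqe⟩ := aux_dot_pos K hK x hx
  have hdot : star x ⬝ᵥ ((σ • M - A) *ᵥ x) = 0 := by
    rw [hxeq, dotProduct_zero]
  have hexp : star x ⬝ᵥ ((σ • M - A) *ᵥ x)
      = (σ - 1) * (p : ℂ) + ((1 : ℂ) - σ * (1 + Complex.I * β)) * (q : ℂ) := by
    rw [hA, hM]
    rw [Matrix.sub_mulVec, Matrix.smul_mulVec, Matrix.sub_mulVec,
      Matrix.sub_mulVec, Matrix.smul_mulVec]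
    rw [dotProduct_sub, dotProduct_smul, dotProduct_sub, dotProduct_sub,
      dotProduct_smul, hpe, hqe]
    simp only [smul_eq_mul]
    ring
  rw [hexp] at hdot
  -- solve for σ
  set a : ℝ := p - q with haa
  set b : ℝ := β * q with hbb
  have hb : b ≠ 0 := by positivity
  have hσeq : σ * ((a : ℂ) - (b : ℂ) * Complex.I) = (a : ℂ) := by
    have : (σ - 1) * (p : ℂ) + ((1 : ℂ) - σ * (1 + Complex.I * β)) * (q : ℂ) = 0 := hdot
    push_cast [haa, hbb]
    linear_combination this
  have hden : (a : ℂ) - (b : ℂ) * Complex.I ≠ 0 := by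
    intro h
    apply hb
    have := congrArg Complex.im h
    simpa using this
  have hσval : σ = (a : ℂ) / ((a : ℂ) - (b : ℂ) * Complex.I) :=
    (eq_div_iff hden).mpr hσeq
  have hdiff : σ - 1/2 = ((a : ℂ) + (b : ℂ) * Complex.I)
      / (2 * ((a : ℂ) - (b : ℂ) * Complex.I)) := by
    rw [hσval]
    field_simp
    ring
  rw [hdiff, norm_div, norm_mul]
  have habs : ‖(a : ℂ) + (b : ℂ) * Complex.I‖
      = ‖(a : ℂ) - (b : ℂ) * Complex.I‖ := by
    have : (a : ℂ) - (b : ℂ) * Complex.I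
        = starRingEnd ℂ ((a : ℂ) + (b : ℂ) * Complex.I) := by
      simp [Complex.ext_iff]
    rw [this, Complex.norm_conj]
  rw [habs, Complex.norm_two]
  rw [div_eq_iff (mul_ne_zero two_ne_zero (norm_ne_zero_iff.mpr hden))]
  ring
end

section
/- Suppose β > 0 and M is invertible. Then every element σ of the spectrum of the complex matrix A M⁻¹ satisfies both |σ - 1/2| ≤ 1/2 and |σ - (1 - i(β/2))| ≥ β/2; that is, the spectrum lies in the closed disk of radius 1/2 about 1/2 with the open disk of radius β/2 about 1 - i(β/2) removed. -/
open Matrix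

/-- From spectrum membership of `A * M⁻¹` (with `M` invertible) extract a
generalized eigenvector: a nonzero `x` with `A *ᵥ x = σ • (M *ᵥ x)`. -/
theorem csl_eig_of_spec {n : ℕ} (A M : Matrix (Fin n) (Fin n) ℂ) (hMinv : IsUnit M)
    (σ : ℂ) (hσ : σ ∈ spectrum ℂ (A * M⁻¹)) :
    ∃ x : Fin n → ℂ, x ≠ 0 ∧ A *ᵥ x = σ • (M *ᵥ x) := by
  rw [spectrum.mem_iff] at hσ
  rw [Matrix.isUnit_iff_isUnit_det, isUnit_iff_ne_zero, not_not] at hσ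
  obtain ⟨v, hv0, hv⟩ := Matrix.exists_mulVec_eq_zero_iff.mpr hσ
  have hdet : IsUnit M.det := (Matrix.isUnit_iff_isUnit_det M).mp hMinv
  have hMx : M *ᵥ (M⁻¹ *ᵥ v) = v := by
    rw [mulVec_mulVec, Matrix.mul_nonsing_inv _ hdet, one_mulVec]
  refine ⟨M⁻¹ *ᵥ v, ?_, ?_⟩
  · intro h
    apply hv0
    rw [h, mulVec_zero] at hMx
    exact hMx.symm
  · rw [sub_mulVec, sub_eq_zero, Algebra.algebraMap_eq_smul_one, smul_mulVec,
      one_mulVec] at hv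
    have h2 : (A * M⁻¹) *ᵥ v = σ • v := hv.symm
    rw [← mulVec_mulVec] at h2
    rw [hMx, h2]

/-- Hermitian quadratic forms are real. -/
theorem csl_quad_conj {n : ℕ} (P : Matrix (Fin n) (Fin n) ℂ) (hP : P.IsHermitian)
    (x : Fin n → ℂ) :
    ((star x ⬝ᵥ P *ᵥ x).re : ℂ) = star x ⬝ᵥ P *ᵥ x := by
  rw [Complex.conj_eq_iff_re.mp]
  calc (starRingEnd ℂ) (star x ⬝ᵥ P *ᵥ x)
      = star (star x ⬝ᵥ P *ᵥ x) := rfl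
    _ = star (P *ᵥ x) ⬝ᵥ star (star x) := (star_dotProduct_star _ _).symm
    _ = (star x ᵥ* Pᴴ) ⬝ᵥ x := by rw [star_mulVec, star_star]
    _ = star x ⬝ᵥ (Pᴴ *ᵥ x) := (dotProduct_mulVec _ _ _).symm
    _ = star x ⬝ᵥ P *ᵥ x := by rw [hP.eq]

/-- The real part of the quadratic form of the complexification of a real matrix
splits into the quadratic forms of the real and imaginary parts. -/
theorem csl_re_quad {n : ℕ} (P : Matrix (Fin n) (Fin n) ℝ) (x : Fin n → ℂ) :
    (star x ⬝ᵥ (P.map Complex.ofReal) *ᵥ x).re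
      = star (fun i => (x i).re) ⬝ᵥ P *ᵥ (fun i => (x i).re)
        + star (fun i => (x i).im) ⬝ᵥ P *ᵥ (fun i => (x i).im) := by
  simp [dotProduct, mulVec, Finset.mul_sum, Complex.re_sum, Complex.mul_re,
    Finset.sum_add_distrib, mul_comm]

/-- The scalar inequality at the heart of the spectral inclusion. -/
theorem csl_key_ineqs (l b k β : ℝ) (hl : 0 ≤ l) (hb : 0 ≤ b) (hk : 0 < k) (hβ : 0 < β)
    (σ : ℂ)
    (heq : (l:ℂ) - Complex.I * b - k = σ * ((l:ℂ) - Complex.I * b - (1 + Complex.I * β) * k)) :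
    ‖σ - 1/2‖ ≤ 1/2 ∧ β / 2 ≤ ‖σ - (1 - Complex.I * ((β:ℂ) / 2))‖ := by
  set num : ℂ := (l:ℂ) - Complex.I * b - k with hnum
  set d : ℂ := (l:ℂ) - Complex.I * b - (1 + Complex.I * β) * k with hd'
  have him : d.im = -(b + β*k) := by
    simp [hd', Complex.sub_im, Complex.mul_im, Complex.add_im]
    ring
  have hd : d ≠ 0 := by
    intro h
    rw [h] at him
    simp at him
    nlinarith
  have hda : 0 < ‖d‖ := norm_pos_iff.mpr hd
  have hσ : σ = num / d := (eq_div_iff hd).mpr heq.symm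
  have h2d : ‖2*d‖ = 2 * ‖d‖ := by
    rw [norm_mul]; norm_num
  constructor
  · have h1 : σ - 1/2 = (2*num - d)/(2*d) := by rw [hσ]; field_simp
    have key : ‖2*num - d‖ ≤ ‖d‖ := by
      rw [Complex.norm_def, Complex.norm_def]
      apply Real.sqrt_le_sqrt
      simp [Complex.normSq_apply, hnum, hd', Complex.sub_re, Complex.sub_im,
        Complex.mul_re, Complex.mul_im, Complex.add_re, Complex.add_im]
      nlinarith [mul_nonneg (mul_nonneg hb hβ.le) hk.le]
    rw [h1, norm_div, h2d, div_le_iff₀ (by positivity)]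
    linarith
  · have h2 : σ - (1 - Complex.I * ((β:ℂ)/2)) = (Complex.I*β) * (2*k + d) / (2*d) := by
      rw [hσ]; field_simp; ring
    have key : ‖d‖ ≤ ‖2*(k:ℂ) + d‖ := by
      rw [Complex.norm_def, Complex.norm_def]
      apply Real.sqrt_le_sqrt
      simp [Complex.normSq_apply, hd', Complex.sub_re, Complex.sub_im,
        Complex.mul_re, Complex.mul_im, Complex.add_re, Complex.add_im]
      nlinarith [mul_nonneg hl hk.le]
    have hIb : ‖Complex.I*(β:ℂ)‖ = β := by
      rw [norm_mul]; simp [abs_of_pos hβ]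
    rw [h2, norm_div, norm_mul, hIb, h2d, le_div_iff₀ (by positivity)]
    nlinarith

/-- **Tighter inclusion region for the CSL-preconditioned spectrum.**
With `A = L - iB - K` and `M = L - iB - (1+iβ)K`, where `L, B` are real symmetric
positive semidefinite and `K` is real symmetric positive definite, `β > 0` and `M`
invertible, the spectrum of `A * M⁻¹` lies in the closed disk of radius `1/2`
centered at `1/2` minus the open disk of radius `β/2` centered at `1 - i β/2`. -/
theorem spectrum_csl_inclusion_region {n : ℕ}
    (L B K : Matrix (Fin n) (Fin n) ℝ)
    (hL : L.PosSemidef) (hB : B.PosSemidef) (hK : K.PosDef)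
    (β : ℝ) (hβ : 0 < β)
    (A M : Matrix (Fin n) (Fin n) ℂ)
    (hA : A = L.map Complex.ofReal - Complex.I • B.map Complex.ofReal
              - K.map Complex.ofReal)
    (hM : M = L.map Complex.ofReal - Complex.I • B.map Complex.ofReal
              - ((1 : ℂ) + Complex.I * (β : ℂ)) • K.map Complex.ofReal)
    (hMinv : IsUnit M) :
    ∀ σ ∈ spectrum ℂ (A * M⁻¹),
      ‖σ - 1/2‖ ≤ 1/2 ∧
      β / 2 ≤ ‖σ - (1 - Complex.I * (β / 2 : ℂ))‖ := by
  intro σ hσ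
  obtain ⟨x, hx0, hx⟩ := csl_eig_of_spec A M hMinv σ hσ
  set u : Fin n → ℝ := fun i => (x i).re with hu
  set v : Fin n → ℝ := fun i => (x i).im with hv
  set l : ℝ := (star x ⬝ᵥ (L.map Complex.ofReal) *ᵥ x).re with hl'
  set b : ℝ := (star x ⬝ᵥ (B.map Complex.ofReal) *ᵥ x).re with hb'
  set k : ℝ := (star x ⬝ᵥ (K.map Complex.ofReal) *ᵥ x).re with hk'
  have hcL : ((l : ℂ)) = star x ⬝ᵥ (L.map Complex.ofReal) *ᵥ x :=
    csl_quad_conj _ (hL.1.map _ fun r => (Complex.conj_ofReal r).symm) x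
  have hcB : ((b : ℂ)) = star x ⬝ᵥ (B.map Complex.ofReal) *ᵥ x :=
    csl_quad_conj _ (hB.1.map _ fun r => (Complex.conj_ofReal r).symm) x
  have hcK : ((k : ℂ)) = star x ⬝ᵥ (K.map Complex.ofReal) *ᵥ x :=
    csl_quad_conj _ (hK.1.map _ fun r => (Complex.conj_ofReal r).symm) x
  -- signs
  have hLu : 0 ≤ star u ⬝ᵥ L *ᵥ u := by simpa using hL.re_dotProduct_nonneg u
  have hLv : 0 ≤ star v ⬝ᵥ L *ᵥ v := by simpa using hL.re_dotProduct_nonneg v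
  have hBu : 0 ≤ star u ⬝ᵥ B *ᵥ u := by simpa using hB.re_dotProduct_nonneg u
  have hBv : 0 ≤ star v ⬝ᵥ B *ᵥ v := by simpa using hB.re_dotProduct_nonneg v
  have hl : 0 ≤ l := by
    rw [hl', csl_re_quad]
    exact add_nonneg hLu hLv
  have hb : 0 ≤ b := by
    rw [hb', csl_re_quad]
    exact add_nonneg hBu hBv
  have huv : u ≠ 0 ∨ v ≠ 0 := by
    by_contra h
    push_neg at h
    apply hx0
    funext i
    have h1 : u i = 0 := by rw [h.1]; rfl
    have h2 : v i = 0 := by rw [h.2]; rfl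
    exact Complex.ext h1 h2
  have hk : 0 < k := by
    rw [hk', csl_re_quad]
    rcases huv with h | h
    · have := hK.re_dotProduct_pos h
      have h2 : 0 ≤ star v ⬝ᵥ K *ᵥ v := by simpa using hK.posSemidef.re_dotProduct_nonneg v
      simp only [RCLike.re_to_real] at this
      linarith
    · have := hK.re_dotProduct_pos h
      have h2 : 0 ≤ star u ⬝ᵥ K *ᵥ u := by simpa using hK.posSemidef.re_dotProduct_nonneg u
      simp only [RCLike.re_to_real] at this
      linarith
  -- the scalar equation
  have heqd : star x ⬝ᵥ A *ᵥ x = σ * (star x ⬝ᵥ M *ᵥ x) := by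
    rw [hx, dotProduct_smul, smul_eq_mul]
  have heqA : star x ⬝ᵥ A *ᵥ x = (l:ℂ) - Complex.I * b - k := by
    rw [hA, sub_mulVec, sub_mulVec, smul_mulVec, dotProduct_sub, dotProduct_sub,
      dotProduct_smul, smul_eq_mul, ← hcL, ← hcB, ← hcK]
  have heqM : star x ⬝ᵥ M *ᵥ x = (l:ℂ) - Complex.I * b - (1 + Complex.I * β) * k := by
    rw [hM, sub_mulVec, sub_mulVec, smul_mulVec, smul_mulVec, dotProduct_sub,
      dotProduct_sub, dotProduct_smul, dotProduct_smul, smul_eq_mul, smul_eq_mul,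
      ← hcL, ← hcB, ← hcK]
  have heq : (l:ℂ) - Complex.I * b - k = σ * ((l:ℂ) - Complex.I * b - (1 + Complex.I * β) * k) := by
    rw [← heqA, ← heqM]
    exact heqd
  exact csl_key_ineqs l b k β hl hb hk hβ σ heq
end

section
/- Let x ∈ ℂⁿ be a nonzero vector and λ ∈ ℂ be such that (L - iB)x = λ Kx (a generalized eigenpair of the pencil (L - iB, K), with L, B, K regarded as complex matrices). Then Re(λ) ≥ 0 and Im(λ) ≤ 0. -/
open Matrix ComplexOrder

lemma psd_map_ofReal {n : ℕ} {M : Matrix (Fin n) (Fin n) ℝ} (hM : M.PosSemidef) :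
    (M.map Complex.ofReal).PosSemidef := by
  open scoped MatrixOrder in
  obtain ⟨A, hA⟩ := CStarAlgebra.nonneg_iff_eq_star_mul_self.mp hM.nonneg
  rw [star_eq_conjTranspose] at hA
  subst hA
  have heq : (Aᴴ * A).map Complex.ofReal
      = (A.map Complex.ofReal)ᴴ * (A.map Complex.ofReal) := by
    ext i j
    simp [Matrix.mul_apply, conjTranspose_apply, map_apply]
  rw [heq]
  exact posSemidef_conjTranspose_mul_self _

/-- **Location of generalized eigenvalues of the pencil `(L - iB, K)`.**
If `L, B` are real symmetric positive semidefinite, `K` is real symmetric positive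
definite, and `(L - iB) x = λ K x` for some nonzero `x ∈ ℂⁿ`, then
`Re(λ) ≥ 0` and `Im(λ) ≤ 0`. -/
theorem generalized_eigenvalue_location {n : ℕ}
    (L B K : Matrix (Fin n) (Fin n) ℝ)
    (hL : L.PosSemidef) (hB : B.PosSemidef) (hK : K.PosDef)
    (x : Fin n → ℂ) (hx : x ≠ 0) (lam : ℂ)
    (h : (L.map Complex.ofReal - Complex.I • B.map Complex.ofReal).mulVec x
          = lam • (K.map Complex.ofReal).mulVec x) :
    0 ≤ lam.re ∧ lam.im ≤ 0 := by
  set L' := L.map Complex.ofReal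
  set B' := B.map Complex.ofReal
  set K' := K.map Complex.ofReal
  have hL' : L'.PosSemidef := psd_map_ofReal hL
  have hB' : B'.PosSemidef := psd_map_ofReal hB
  have hK' : K'.PosSemidef := psd_map_ofReal hK.posSemidef
  set a := star x ⬝ᵥ L' *ᵥ x with ha
  set b := star x ⬝ᵥ B' *ᵥ x with hb
  set k := star x ⬝ᵥ K' *ᵥ x with hk
  have hane : 0 ≤ a := hL'.dotProduct_mulVec_nonneg x
  have hbne : 0 ≤ b := hB'.dotProduct_mulVec_nonneg x
  have hkne : 0 ≤ k := hK'.dotProduct_mulVec_nonneg x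
  -- k ≠ 0 since K' is invertible
  have hdet : IsUnit K'.det := by
    have : K'.det = Complex.ofReal K.det := by
      rw [show K' = Complex.ofRealHom.mapMatrix K from rfl, ← RingHom.map_det]
      rfl
    rw [this]
    simp only [isUnit_iff_ne_zero, ne_eq, Complex.ofReal_eq_zero]
    exact hK.det_pos.ne'
  have hKx : K' *ᵥ x ≠ 0 := fun h0 => hx <| by
    have hinj : Function.Injective K'.mulVec := mulVec_injective_iff_isUnit.mpr ((Matrix.isUnit_iff_isUnit_det K').mpr hdet)
    have h1 : K' *ᵥ x = K' *ᵥ 0 := by simpa using h0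
    exact hinj h1
  have hk0 : k ≠ 0 := fun h0 => hKx ((hK'.dotProduct_mulVec_zero_iff x).mp h0)
  -- key equation
  have key : a - Complex.I * b = lam * k := by
    have := congrArg (fun v => star x ⬝ᵥ v) h
    simpa [ha, hb, hk, Matrix.sub_mulVec, Matrix.smul_mulVec,
      dotProduct_sub, dotProduct_smul, smul_eq_mul] using this
  have haim : a.im = 0 := (Complex.le_def.mp hane).2.symm
  have hbim : b.im = 0 := (Complex.le_def.mp hbne).2.symm
  have hkim : k.im = 0 := (Complex.le_def.mp hkne).2.symm
  have hare : 0 ≤ a.re := (Complex.le_def.mp hane).1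
  have hbre : 0 ≤ b.re := (Complex.le_def.mp hbne).1
  have hkre : 0 < k.re := lt_of_le_of_ne (Complex.le_def.mp hkne).1 (by
    intro h0
    apply hk0
    apply Complex.ext <;> simp [hkim, ← h0])
  have hre : a.re = lam.re * k.re := by
    have := congrArg Complex.re key
    simpa [Complex.sub_re, Complex.mul_re, haim, hbim, hkim] using this
  have him : -b.re = lam.im * k.re := by
    have := congrArg Complex.im key
    simpa [Complex.sub_im, Complex.mul_im, haim, hbim, hkim] using this
  constructor
  · have : lam.re = a.re / k.re := by field_simp [hre]; linarith
    rw [this]; positivity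
  · have : lam.im = -b.re / k.re := by field_simp [← him]; linarith
    rw [this]
    apply div_nonpos_of_nonpos_of_nonneg (by linarith) hkre.le
end

section
/- Suppose β > 0. (i) If x ∈ ℂⁿ is nonzero, σ ∈ ℂ with σ ≠ 1, and A x = σ M x, then (L - iB)x = λ K x with λ = (1 - σ(1+iβ))/(1 - σ). (ii) Conversely, if x ∈ ℂⁿ is nonzero, λ ∈ ℂ with λ ≠ 1 + iβ, and (L - iB)x = λ K x, then A x = σ M x with σ = (λ - 1)/(λ - (1+iβ)). -/
open Matrix

section Pencil

variable {𝕜 V : Type*} [Field 𝕜] [AddCommGroup V] [Module 𝕜 V]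

theorem eq_div_smul_of_sub_eq_smul_sub_smul {p k : V} {c σ : 𝕜} (hσ : σ ≠ 1)
    (h : p - k = σ • (p - c • k)) : p = ((1 - σ * c) / (1 - σ)) • k := by
  have hσ' : 1 - σ ≠ 0 := sub_ne_zero.mpr hσ.symm
  have hscaled : (1 - σ) • p = (1 - σ * c) • k := by
    linear_combination (norm := module) h
  rw [div_eq_inv_mul, mul_smul, ← hscaled, smul_smul, inv_mul_cancel₀ hσ', one_smul]

theorem sub_eq_div_smul_sub_smul_of_eq_smul {p k : V} {c lam : 𝕜} (hlam : lam ≠ c)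
    (h : p = lam • k) : p - k = ((lam - 1) / (lam - c)) • (p - c • k) := by
  have hlam' : lam - c ≠ 0 := sub_ne_zero.mpr hlam
  rw [h, ← sub_smul, smul_smul, div_mul_cancel₀ _ hlam', sub_smul, one_smul]

end Pencil

theorem eigenpair_correspondence_general {n : ℕ}
    (L B K : Matrix (Fin n) (Fin n) ℝ)
    (β : ℝ)
    (A M : Matrix (Fin n) (Fin n) ℂ)
    (hA : A = L.map Complex.ofReal - Complex.I • B.map Complex.ofReal
              - K.map Complex.ofReal)
    (hM : M = L.map Complex.ofReal - Complex.I • B.map Complex.ofReal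
              - ((1 : ℂ) + Complex.I * (β : ℂ)) • K.map Complex.ofReal) :
    (∀ (x : Fin n → ℂ), x ≠ 0 → ∀ σ : ℂ, σ ≠ 1 →
        A.mulVec x = σ • M.mulVec x →
        (L.map Complex.ofReal - Complex.I • B.map Complex.ofReal).mulVec x
          = ((1 - σ * (1 + Complex.I * (β : ℂ))) / (1 - σ))
              • (K.map Complex.ofReal).mulVec x) ∧
    (∀ (x : Fin n → ℂ), x ≠ 0 → ∀ lam : ℂ, lam ≠ 1 + Complex.I * (β : ℂ) →
        (L.map Complex.ofReal - Complex.I • B.map Complex.ofReal).mulVec x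
          = lam • (K.map Complex.ofReal).mulVec x →
        A.mulVec x
          = ((lam - 1) / (lam - (1 + Complex.I * (β : ℂ)))) • M.mulVec x) := by
  subst hA hM
  generalize L.map Complex.ofReal - Complex.I • B.map Complex.ofReal = P
  generalize K.map Complex.ofReal = K
  simp only [sub_mulVec, smul_mulVec]
  exact ⟨fun x _ σ hσ h ↦ eq_div_smul_of_sub_eq_smul_sub_smul hσ h,
    fun x _ lam hlam h ↦ sub_eq_div_smul_sub_smul_of_eq_smul hlam h⟩

/-- **Correspondence between eigenpairs of `A x = σ M x` and the pencil `(L - iB, K)`.**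
With `A = L - iB - K` and `M = L - iB - (1+iβ)K`, `β > 0`:
(i) if `A x = σ M x` with `x ≠ 0` and `σ ≠ 1`, then `(L - iB) x = λ K x` with
`λ = (1 - σ(1+iβ))/(1 - σ)`; (ii) conversely, if `(L - iB) x = λ K x` with `x ≠ 0`
and `λ ≠ 1 + iβ`, then `A x = σ M x` with `σ = (λ - 1)/(λ - (1+iβ))`. -/
theorem eigenpair_correspondence {n : ℕ}
    (L B K : Matrix (Fin n) (Fin n) ℝ)
    (hL : L.PosSemidef) (hB : B.PosSemidef) (hK : K.PosDef)
    (β : ℝ) (hβ : 0 < β)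
    (A M : Matrix (Fin n) (Fin n) ℂ)
    (hA : A = L.map Complex.ofReal - Complex.I • B.map Complex.ofReal
              - K.map Complex.ofReal)
    (hM : M = L.map Complex.ofReal - Complex.I • B.map Complex.ofReal
              - ((1 : ℂ) + Complex.I * (β : ℂ)) • K.map Complex.ofReal) :
    (∀ (x : Fin n → ℂ), x ≠ 0 → ∀ σ : ℂ, σ ≠ 1 →
        A.mulVec x = σ • M.mulVec x →
        (L.map Complex.ofReal - Complex.I • B.map Complex.ofReal).mulVec x
          = ((1 - σ * (1 + Complex.I * (β : ℂ))) / (1 - σ))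
              • (K.map Complex.ofReal).mulVec x) ∧
    (∀ (x : Fin n → ℂ), x ≠ 0 → ∀ lam : ℂ, lam ≠ 1 + Complex.I * (β : ℂ) →
        (L.map Complex.ofReal - Complex.I • B.map Complex.ofReal).mulVec x
          = lam • (K.map Complex.ofReal).mulVec x →
        A.mulVec x
          = ((lam - 1) / (lam - (1 + Complex.I * (β : ℂ)))) • M.mulVec x) :=
  eigenpair_correspondence_general L B K β A M hA hM
end

section
/- Let A : Ξ → ℝ^{n×n} be a map whose entries a_{μν} are measurable and such that each product a_{μν} φ_i φ_j is ρ-integrable. Then: (i) the blocks of the stochastic Galerkin projection satisfy 𝒢(A)_{ij} = 𝒢(A)_{ji} for all 0 ≤ i, j ≤ m; (ii) if A(ξ) is symmetric for ρ-almost all ξ, then 𝒢(A) is symmetric; (iii) if A(ξ) is symmetric positive semidefinite for ρ-almost all ξ, then 𝒢(A) is symmetric positive semidefinite; (iv) if A(ξ) is symmetric positive definite for ρ-almost all ξ, then 𝒢(A) is symmetric positive definite. -/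
open MeasureTheory Matrix

/-- **Structure preservation of the stochastic Galerkin projection.**
Let `(Ξ, ρ)` be a probability space, `φ_0, …, φ_m` an orthonormal family in
`L²(Ξ, ρ)`, and `A : Ξ → ℝ^{n×n}` with measurable entries such that each
`a_{μν} φ_i φ_j` is integrable.  The Galerkin projection `G` with blocks
`G_{(i,μ),(j,ν)} = ∫ a_{μν} φ_i φ_j dρ` satisfies: (i) `G_{ij} = G_{ji}` blockwise;
(ii) if `A(ξ)` is a.e. symmetric, then `G` is symmetric; (iii) if `A(ξ)` is a.e.
symmetric positive semidefinite, then so is `G`; (iv) if `A(ξ)` is a.e. symmetric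
positive definite, then so is `G`. -/
theorem galerkin_projection_structure
    {Ξ : Type*} [MeasurableSpace Ξ] (ρ : Measure Ξ) [IsProbabilityMeasure ρ]
    {m n : ℕ} (φ : Fin (m + 1) → Ξ → ℝ)
    (hφmeas : ∀ i, Measurable (φ i))
    (hφint : ∀ i j, Integrable (fun ξ => φ i ξ * φ j ξ) ρ)
    (hortho : ∀ i j, ∫ ξ, φ i ξ * φ j ξ ∂ρ = if i = j then 1 else 0)
    (A : Ξ → Matrix (Fin n) (Fin n) ℝ)
    (hAmeas : ∀ μ ν, Measurable (fun ξ => A ξ μ ν))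
    (hAint : ∀ i j μ ν, Integrable (fun ξ => A ξ μ ν * φ i ξ * φ j ξ) ρ)
    (G : Matrix (Fin (m + 1) × Fin n) (Fin (m + 1) × Fin n) ℝ)
    (hG : G = Matrix.of fun p q => ∫ ξ, A ξ p.2 q.2 * φ p.1 ξ * φ q.1 ξ ∂ρ) :
    (∀ i j μ ν, G (i, μ) (j, ν) = G (j, μ) (i, ν)) ∧
    ((∀ᵐ ξ ∂ρ, (A ξ).IsSymm) → G.IsSymm) ∧
    ((∀ᵐ ξ ∂ρ, (A ξ).PosSemidef) → G.PosSemidef) ∧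
    ((∀ᵐ ξ ∂ρ, (A ξ).PosDef) → G.PosDef) := by
  subst hG
  set M : Matrix (Fin (m + 1) × Fin n) (Fin (m + 1) × Fin n) ℝ :=
    Matrix.of fun p q => ∫ ξ, A ξ p.2 q.2 * φ p.1 ξ * φ q.1 ξ ∂ρ with hM
  -- (i)
  have part1 : ∀ i j μ ν, M (i, μ) (j, ν) = M (j, μ) (i, ν) := by
    intro i j μ ν
    simp only [hM, Matrix.of_apply]
    congr 1
    funext ξ
    ring
  -- (ii)
  have part2 : (∀ᵐ ξ ∂ρ, (A ξ).IsSymm) → M.IsSymm := by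
    intro hs
    rw [Matrix.IsSymm]
    ext p q
    simp only [hM, Matrix.transpose_apply, Matrix.of_apply]
    refine integral_congr_ae ?_
    filter_upwards [hs] with ξ hξ
    have := hξ.apply p.2 q.2
    rw [this]
    ring
  have herm : M.IsSymm → M.IsHermitian := by
    intro hs
    ext p q
    simpa [Matrix.conjTranspose_apply] using hs.apply p q
  -- quadratic form identity
  have key : ∀ x : Fin (m + 1) × Fin n → ℝ,
      x ⬝ᵥ (M *ᵥ x) =
        ∫ ξ, (fun μ => ∑ i, x (i, μ) * φ i ξ) ⬝ᵥ
          (A ξ *ᵥ fun μ => ∑ i, x (i, μ) * φ i ξ) ∂ρ := by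
    intro x
    have hintpq : ∀ p q : Fin (m + 1) × Fin n,
        Integrable (fun ξ => x p * (A ξ p.2 q.2 * φ p.1 ξ * φ q.1 ξ) * x q) ρ :=
      fun p q => ((hAint p.1 q.1 p.2 q.2).const_mul (x p)).mul_const (x q)
    have step1 : x ⬝ᵥ (M *ᵥ x)
        = ∑ p : Fin (m + 1) × Fin n, ∑ q : Fin (m + 1) × Fin n,
            ∫ ξ, x p * (A ξ p.2 q.2 * φ p.1 ξ * φ q.1 ξ) * x q ∂ρ := by
      simp only [dotProduct, mulVec, hM, Matrix.of_apply, Finset.mul_sum]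
      refine Finset.sum_congr rfl fun p _ => Finset.sum_congr rfl fun q _ => ?_
      rw [integral_mul_const, integral_const_mul]
      ring
    rw [step1]
    rw [show (∑ p : Fin (m + 1) × Fin n, ∑ q : Fin (m + 1) × Fin n,
        ∫ ξ, x p * (A ξ p.2 q.2 * φ p.1 ξ * φ q.1 ξ) * x q ∂ρ)
      = ∑ p : Fin (m + 1) × Fin n,
          ∫ ξ, ∑ q : Fin (m + 1) × Fin n,
            x p * (A ξ p.2 q.2 * φ p.1 ξ * φ q.1 ξ) * x q ∂ρ from
      Finset.sum_congr rfl fun p _ =>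
        (integral_finset_sum _ fun q _ => hintpq p q).symm]
    rw [← integral_finset_sum _ fun p _ => integrable_finset_sum _
      fun q _ => hintpq p q]
    refine integral_congr_ae (Filter.Eventually.of_forall fun ξ => ?_)
    simp only [dotProduct, mulVec, Fintype.sum_prod_type]
    rw [Finset.sum_comm]
    refine Finset.sum_congr rfl fun μ _ => ?_
    rw [Finset.sum_mul]
    refine Finset.sum_congr rfl fun i _ => ?_
    rw [Finset.mul_sum, Finset.sum_comm]
    refine Finset.sum_congr rfl fun ν _ => ?_
    rw [Finset.mul_sum, Finset.mul_sum]
    refine Finset.sum_congr rfl fun j _ => ?_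
    ring
  -- norm identity
  have norm : ∀ x : Fin (m + 1) × Fin n → ℝ,
      ∫ ξ, ∑ μ, (∑ i, x (i, μ) * φ i ξ) ^ 2 ∂ρ = ∑ p, x p ^ 2 := by
    intro x
    have expand : ∀ ξ μ, (∑ i, x (i, μ) * φ i ξ) ^ 2
        = ∑ i, ∑ j, x (i, μ) * x (j, μ) * (φ i ξ * φ j ξ) := by
      intro ξ μ
      rw [sq, Finset.sum_mul_sum]
      exact Finset.sum_congr rfl fun i _ => Finset.sum_congr rfl fun j _ => by ring
    have : ∫ ξ, ∑ μ, (∑ i, x (i, μ) * φ i ξ) ^ 2 ∂ρ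
        = ∑ μ, ∑ i, ∑ j, x (i, μ) * x (j, μ) * ∫ ξ, φ i ξ * φ j ξ ∂ρ := by
      simp only [expand]
      rw [integral_finset_sum _ fun μ _ => integrable_finset_sum _
        fun i _ => integrable_finset_sum _ fun j _ => (hφint i j).const_mul _]
      refine Finset.sum_congr rfl fun μ _ => ?_
      rw [integral_finset_sum _ fun i _ => integrable_finset_sum _
        fun j _ => (hφint i j).const_mul _]
      refine Finset.sum_congr rfl fun i _ => ?_
      rw [integral_finset_sum _ fun j _ => (hφint i j).const_mul _]
      exact Finset.sum_congr rfl fun j _ => integral_const_mul _ _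
    rw [this]
    simp only [hortho, mul_ite, mul_one, mul_zero, Finset.sum_ite_eq,
      Finset.mem_univ, if_true]
    rw [Fintype.sum_prod_type, Finset.sum_comm]
    exact Finset.sum_congr rfl fun μ _ => Finset.sum_congr rfl fun i _ => by ring
  refine ⟨part1, part2, ?_, ?_⟩
  · -- PosSemidef
    intro hps
    refine posSemidef_iff_dotProduct_mulVec.mpr ⟨herm (part2 (hps.mono fun ξ h => (by rw [Matrix.IsSymm, ← Matrix.conjTranspose_eq_transpose_of_trivial]; exact h.isHermitian))), fun x => ?_⟩
    have hx : star x = x := by simp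
    rw [hx, key x]
    refine integral_nonneg_of_ae ?_
    filter_upwards [hps] with ξ hξ
    simpa using hξ.dotProduct_mulVec_nonneg fun μ => ∑ i, x (i, μ) * φ i ξ
  · -- PosDef
    intro hpd
    have hherm := herm (part2 (hpd.mono fun ξ h => (by rw [Matrix.IsSymm, ← Matrix.conjTranspose_eq_transpose_of_trivial]; exact h.isHermitian)))
    refine posDef_iff_dotProduct_mulVec.mpr ⟨hherm, fun x hx0 => ?_⟩
    have hx : star x = x := by simp
    rw [hx, key x]
    set y : Ξ → Fin n → ℝ := fun ξ μ => ∑ i, x (i, μ) * φ i ξ with hy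
    have hqint : Integrable (fun ξ => (y ξ) ⬝ᵥ (A ξ *ᵥ y ξ)) ρ := by
      have : (fun ξ => (y ξ) ⬝ᵥ (A ξ *ᵥ y ξ))
          = fun ξ => ∑ p : Fin (m + 1) × Fin n, ∑ q : Fin (m + 1) × Fin n,
              x p * (A ξ p.2 q.2 * φ p.1 ξ * φ q.1 ξ) * x q := by
        funext ξ
        simp only [hy, dotProduct, mulVec, Fintype.sum_prod_type]
        rw [Finset.sum_comm]
        refine (Finset.sum_congr rfl fun μ _ => ?_).symm
        rw [Finset.sum_mul]
        refine Finset.sum_congr rfl fun i _ => ?_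
        rw [Finset.mul_sum, Finset.sum_comm]
        refine Finset.sum_congr rfl fun ν _ => ?_
        rw [Finset.mul_sum, Finset.mul_sum]
        refine Finset.sum_congr rfl fun j _ => ?_
        ring
      rw [this]
      exact integrable_finset_sum _ fun p _ => integrable_finset_sum _
        fun q _ => ((hAint p.1 q.1 p.2 q.2).const_mul (x p)).mul_const (x q)
    have hnonneg : 0 ≤ᵐ[ρ] fun ξ => (y ξ) ⬝ᵥ (A ξ *ᵥ y ξ) := by
      filter_upwards [hpd] with ξ hξ
      simpa using hξ.posSemidef.dotProduct_mulVec_nonneg (y ξ)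
    have hle : 0 ≤ ∫ ξ, (y ξ) ⬝ᵥ (A ξ *ᵥ y ξ) ∂ρ := integral_nonneg_of_ae hnonneg
    rcases lt_or_eq_of_le hle with h | h
    · exact h
    -- the integral is zero: derive a contradiction
    exfalso
    have hq0 : (fun ξ => (y ξ) ⬝ᵥ (A ξ *ᵥ y ξ)) =ᵐ[ρ] 0 :=
      (integral_eq_zero_iff_of_nonneg_ae hnonneg hqint).mp h.symm
    have hy0 : ∀ᵐ ξ ∂ρ, y ξ = 0 := by
      filter_upwards [hq0, hpd] with ξ hqξ hAξ
      by_contra hne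
      have := hAξ.dotProduct_mulVec_pos hne
      simp only [star_trivial] at this
      rw [Pi.zero_apply] at hqξ
      exact absurd hqξ (ne_of_gt this)
    have hzero : ∫ ξ, ∑ μ, (y ξ μ) ^ 2 ∂ρ = 0 := by
      rw [integral_congr_ae (g := fun _ => (0 : ℝ)) ?_, integral_const]
      · simp
      · filter_upwards [hy0] with ξ hξ
        simp [hξ]
    rw [norm x] at hzero
    have hpos : 0 < ∑ p, x p ^ 2 := by
      obtain ⟨p, hp⟩ := Function.ne_iff.mp hx0
      exact Finset.sum_pos' (fun q _ => sq_nonneg _)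
        ⟨p, Finset.mem_univ p, lt_of_le_of_ne (sq_nonneg _) (Ne.symm (pow_ne_zero 2 hp))⟩
    exact absurd hzero (ne_of_gt hpos)
end

section
/- Let S : Ξ → ℂ^{n×n} have measurable entries lying in L²(Ξ, ρ), let ξ̄ ∈ Ξ be fixed, assume S̄ := S(ξ̄) is invertible, and set ΔS(ξ) = S(ξ) - S̄, Ā = I_{m+1} ⊗ S̄, and A = 𝒢(S). Then ‖Ā⁻¹ A - I_{(m+1)n}‖_F ≤ C_m · ‖S̄⁻¹‖_F · (∫_Ξ ‖ΔS(ξ)‖_F² dρ(ξ))^{1/2}, where C_m = √(m+1) · (Σ_{i,j=0}^m ‖φ_i φ_j‖²_{L²(Ξ,ρ)})^{1/2}. -/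
open MeasureTheory Matrix

/-- The Frobenius norm of a complex matrix. -/
noncomputable def frob {I J : Type*} [Fintype I] [Fintype J] (M : Matrix I J ℂ) : ℝ :=
  Real.sqrt (∑ i, ∑ j, ‖M i j‖ ^ 2)

lemma aux_integrable_mul {Ξ : Type*} [MeasurableSpace Ξ] {ρ : Measure Ξ}
    {f g : Ξ → ℂ} (hf : MemLp f 2 ρ) (hg : MemLp g 2 ρ) :
    Integrable (fun ξ => f ξ * g ξ) ρ := by
  have h := hg.smul (φ := f) hf (p := 2) (q := 2) (r := 1)
  rw [memLp_one_iff_integrable] at h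
  simp only [smul_eq_mul] at h
  exact h

lemma aux_cs {Ξ : Type*} [MeasurableSpace Ξ] {ρ : Measure Ξ}
    {f : Ξ → ℂ} {g : Ξ → ℝ} (hf : MemLp f 2 ρ) (hg : MemLp g 2 ρ) :
    ‖∫ ξ, f ξ * (g ξ : ℂ) ∂ρ‖ ^ 2 ≤
      (∫ ξ, ‖f ξ‖ ^ 2 ∂ρ) * (∫ ξ, g ξ ^ 2 ∂ρ) := by
  have ia : 0 ≤ ∫ ξ, ‖f ξ‖ ^ 2 ∂ρ := integral_nonneg fun ξ => sq_nonneg _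
  have ib : 0 ≤ ∫ ξ, g ξ ^ 2 ∂ρ := integral_nonneg fun ξ => sq_nonneg _
  have h1 : ‖∫ ξ, f ξ * (g ξ : ℂ) ∂ρ‖ ≤
      ∫ ξ, ‖f ξ‖ * |g ξ| ∂ρ := by
    calc ‖∫ ξ, f ξ * (g ξ : ℂ) ∂ρ‖ = ‖∫ ξ, f ξ * (g ξ : ℂ) ∂ρ‖ := by
          rfl
      _ ≤ ∫ ξ, ‖f ξ * (g ξ : ℂ)‖ ∂ρ := norm_integral_le_integral_norm _
      _ = ∫ ξ, ‖f ξ‖ * |g ξ| ∂ρ := by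
          simp [norm_mul]
  have h2 : ∫ ξ, ‖f ξ‖ * |g ξ| ∂ρ ≤
      Real.sqrt (∫ ξ, ‖f ξ‖ ^ 2 ∂ρ) * Real.sqrt (∫ ξ, g ξ ^ 2 ∂ρ) := by
    have hpq : (2 : ℝ).HolderConjugate 2 := Real.HolderConjugate.two_two
    have hfm : MemLp (fun ξ => ‖f ξ‖) (ENNReal.ofReal 2) ρ := by
      have := hf.norm
      simpa [ENNReal.ofReal_ofNat] using this
    have hgm : MemLp (fun ξ => |g ξ|) (ENNReal.ofReal 2) ρ := by
      have := hg.norm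
      simpa [Real.norm_eq_abs, ENNReal.ofReal_ofNat] using this
    have := integral_mul_le_Lp_mul_Lq_of_nonneg hpq
      (Filter.Eventually.of_forall fun ξ => norm_nonneg _)
      (Filter.Eventually.of_forall fun ξ => abs_nonneg _) hfm hgm
    have e2 : ∀ x : ℝ, x ^ (2 : ℝ) = x ^ 2 := fun x => by
      rw [show (2:ℝ) = ((2:ℕ):ℝ) by norm_num, Real.rpow_natCast]
    simp only [e2, sq_abs] at this
    calc ∫ ξ, ‖f ξ‖ * |g ξ| ∂ρ
        ≤ (∫ ξ, ‖f ξ‖ ^ 2 ∂ρ) ^ (1/(2:ℝ)) * (∫ ξ, g ξ ^ 2 ∂ρ) ^ (1/(2:ℝ)) := this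
      _ = _ := by rw [← Real.sqrt_eq_rpow, ← Real.sqrt_eq_rpow]
  calc ‖∫ ξ, f ξ * (g ξ : ℂ) ∂ρ‖ ^ 2
      ≤ (Real.sqrt (∫ ξ, ‖f ξ‖ ^ 2 ∂ρ) * Real.sqrt (∫ ξ, g ξ ^ 2 ∂ρ)) ^ 2 :=
        pow_le_pow_left₀ (norm_nonneg _) (h1.trans h2) 2
    _ = _ := by rw [mul_pow, Real.sq_sqrt ia, Real.sq_sqrt ib]

lemma aux_F2_mul {n : ℕ} (A B : Matrix (Fin n) (Fin n) ℂ) :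
    (∑ μ, ∑ ν, ‖(A * B) μ ν‖ ^ 2) ≤
      (∑ μ, ∑ ν, ‖A μ ν‖ ^ 2) * (∑ μ, ∑ ν, ‖B μ ν‖ ^ 2) := by
  have step : ∀ μ ν, ‖(A * B) μ ν‖ ^ 2 ≤
      (∑ σ, ‖A μ σ‖ ^ 2) * (∑ σ, ‖B σ ν‖ ^ 2) := by
    intro μ ν
    calc ‖(A * B) μ ν‖ ^ 2
        ≤ (∑ σ, ‖A μ σ‖ * ‖B σ ν‖) ^ 2 := by
          apply pow_le_pow_left₀ (norm_nonneg _)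
          rw [Matrix.mul_apply]
          exact (norm_sum_le _ _).trans (le_of_eq (by simp [_root_.map_mul]))
      _ ≤ _ := Finset.sum_mul_sq_le_sq_mul_sq _ _ _
  calc (∑ μ, ∑ ν, ‖(A * B) μ ν‖ ^ 2)
      ≤ ∑ μ, ∑ ν, (∑ σ, ‖A μ σ‖ ^ 2) * (∑ σ, ‖B σ ν‖ ^ 2) :=
        Finset.sum_le_sum fun μ _ => Finset.sum_le_sum fun ν _ => step μ ν
    _ = (∑ μ, ∑ σ, ‖A μ σ‖ ^ 2) * (∑ ν, ∑ σ, ‖B σ ν‖ ^ 2) :=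
        (Finset.sum_mul_sum _ _ _ _).symm
    _ = _ := by congr 1; exact Finset.sum_comm


/-- **Mean value preconditioner bound (Theorem on `‖Ā⁻¹A - I‖_F`).**
With `Ā = I_{m+1} ⊗ S(ξ̄)` and `A = 𝒢(S)` the stochastic Galerkin projection of `S`,
`‖Ā⁻¹ A - I‖_F ≤ C_m ‖S(ξ̄)⁻¹‖_F (∫ ‖ΔS(ξ)‖_F² dρ)^{1/2}` where
`C_m = √(m+1) (Σ_{i,j} ‖φ_i φ_j‖²_{L²})^{1/2}` and `ΔS(ξ) = S(ξ) - S(ξ̄)`. -/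
theorem mean_value_preconditioner_bound
    {Ξ : Type*} [MeasurableSpace Ξ] (ρ : Measure Ξ) [IsProbabilityMeasure ρ]
    {m n : ℕ} (φ : Fin (m + 1) → Ξ → ℝ)
    (hφmeas : ∀ i, Measurable (φ i))
    (hφL2 : ∀ i j, Integrable (fun ξ => (φ i ξ * φ j ξ) ^ 2) ρ)
    (hortho : ∀ i j, ∫ ξ, φ i ξ * φ j ξ ∂ρ = if i = j then 1 else 0)
    (S : Ξ → Matrix (Fin n) (Fin n) ℂ)
    (hSmeas : ∀ μ ν, Measurable (fun ξ => S ξ μ ν))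
    (hSL2 : ∀ μ ν, Integrable (fun ξ => ‖S ξ μ ν‖ ^ 2) ρ)
    (xb : Ξ) (hinv : IsUnit (S xb))
    (Abar A : Matrix (Fin (m + 1) × Fin n) (Fin (m + 1) × Fin n) ℂ)
    (hAbar : Abar = Matrix.of fun p q => if p.1 = q.1 then S xb p.2 q.2 else 0)
    (hA : A = Matrix.of fun p q =>
        ∫ ξ, S ξ p.2 q.2 * ((φ p.1 ξ * φ q.1 ξ : ℝ) : ℂ) ∂ρ) :
    frob (Abar⁻¹ * A - 1) ≤
      (Real.sqrt (m + 1) *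
          Real.sqrt (∑ i, ∑ j, ∫ ξ, (φ i ξ * φ j ξ) ^ 2 ∂ρ)) *
        frob (S xb)⁻¹ *
        Real.sqrt (∫ ξ, frob (S ξ - S xb) ^ 2 ∂ρ) := by
  classical
  have hdet : IsUnit (S xb).det := (Matrix.isUnit_iff_isUnit_det _).mp hinv
  -- MemLp facts
  have hgmem : ∀ i j, MemLp (fun ξ => φ i ξ * φ j ξ) 2 ρ := fun i j =>
    (memLp_two_iff_integrable_sq
      (((hφmeas i).mul (hφmeas j)).aestronglyMeasurable)).mpr (hφL2 i j)
  have hgmemC : ∀ i j, MemLp (fun ξ => ((φ i ξ * φ j ξ : ℝ) : ℂ)) 2 ρ := fun i j => by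
    have hm : Measurable fun ξ => ((φ i ξ * φ j ξ : ℝ) : ℂ) :=
      Complex.measurable_ofReal.comp ((hφmeas i).mul (hφmeas j))
    refine (memLp_two_iff_integrable_sq_norm hm.aestronglyMeasurable).mpr ?_
    simpa only [Complex.norm_real, Real.norm_eq_abs, sq_abs] using hφL2 i j
  have hSmem : ∀ μ ν, MemLp (fun ξ => S ξ μ ν) 2 ρ := fun μ ν =>
    (memLp_two_iff_integrable_sq_norm (hSmeas μ ν).aestronglyMeasurable).mpr
      (by simpa using hSL2 μ ν)
  have hΔmem : ∀ μ ν, MemLp (fun ξ => S ξ μ ν - S xb μ ν) 2 ρ := fun μ ν =>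
    (hSmem μ ν).sub (memLp_const _)
  set E : Fin (m + 1) → Fin (m + 1) → Matrix (Fin n) (Fin n) ℂ := fun i j =>
    Matrix.of fun μ' ν => ∫ ξ, (S ξ μ' ν - S xb μ' ν) * ((φ i ξ * φ j ξ : ℝ) : ℂ) ∂ρ with hE
  have hint1 : ∀ i j (μ' ν : Fin n),
      Integrable (fun ξ => (S ξ μ' ν - S xb μ' ν) * ((φ i ξ * φ j ξ : ℝ) : ℂ)) ρ :=
    fun i j μ' ν => aux_integrable_mul (hΔmem μ' ν) (hgmemC i j)
  have hgint : ∀ i j, Integrable (fun ξ => ((φ i ξ * φ j ξ : ℝ) : ℂ)) ρ := fun i j =>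
    memLp_one_iff_integrable.mp ((hgmemC i j).mono_exponent (by norm_num))
  -- entries of A
  have hAentry : ∀ i j (σ ν : Fin n),
      A (i, σ) (j, ν) = E i j σ ν + S xb σ ν * (if i = j then 1 else 0) := by
    intro i j σ ν
    rw [hA]
    show (∫ ξ, S ξ σ ν * ((φ i ξ * φ j ξ : ℝ) : ℂ) ∂ρ) = _
    have hsplit : (fun ξ => S ξ σ ν * ((φ i ξ * φ j ξ : ℝ) : ℂ)) =
        fun ξ => (S ξ σ ν - S xb σ ν) * ((φ i ξ * φ j ξ : ℝ) : ℂ)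
          + S xb σ ν * ((φ i ξ * φ j ξ : ℝ) : ℂ) := by
      funext ξ; ring
    rw [hsplit, integral_add (hint1 i j σ ν) ((hgint i j).const_mul _),
      integral_const_mul]
    have hco : (∫ ξ, ((φ i ξ * φ j ξ : ℝ) : ℂ) ∂ρ) =
        ((∫ ξ, φ i ξ * φ j ξ ∂ρ : ℝ) : ℂ) := integral_ofReal
    rw [hco, hortho]
    have hcast : ((if i = j then (1:ℝ) else 0 : ℝ) : ℂ) = (if i = j then 1 else 0) := by
      simp [apply_ite Complex.ofReal]
    rw [hcast]
    rfl
  -- the inverse of Abar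
  set B : Matrix (Fin (m + 1) × Fin n) (Fin (m + 1) × Fin n) ℂ :=
    Matrix.of (fun p q => if p.1 = q.1 then (S xb)⁻¹ p.2 q.2 else 0) with hB
  have hABone : Abar * B = 1 := by
    ext ⟨i, μ'⟩ ⟨j, ν⟩
    rw [Matrix.mul_apply, Fintype.sum_prod_type]
    simp only [hAbar, hB, Matrix.of_apply, ite_mul, zero_mul, mul_ite, mul_zero]
    rw [Finset.sum_comm]
    simp only [Finset.sum_ite_eq, Finset.sum_ite_eq', Finset.mem_univ, if_true]
    by_cases h : i = j
    · subst h
      simp only [if_pos rfl, Matrix.one_apply, Prod.ext_iff]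
      simp [Matrix.one_apply, Prod.ext_iff]
      rw [← Matrix.mul_apply, Matrix.mul_nonsing_inv _ hdet, Matrix.one_apply]
    · simp [h, Matrix.one_apply, Prod.ext_iff]
  have hAinv : Abar⁻¹ = B := Matrix.inv_eq_right_inv hABone
  -- entries of the difference matrix
  have hMentry : ∀ (i : Fin (m + 1)) (μ' : Fin n) (j : Fin (m + 1)) (ν : Fin n),
      (Abar⁻¹ * A - 1) (i, μ') (j, ν) = ((S xb)⁻¹ * E i j) μ' ν := by
    intro i μ' j ν
    rw [Matrix.sub_apply, hAinv, Matrix.mul_apply, Fintype.sum_prod_type]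
    simp only [hB, Matrix.of_apply, ite_mul, zero_mul]
    rw [Finset.sum_comm]
    simp only [Finset.sum_ite_eq, Finset.sum_ite_eq', Finset.mem_univ, if_true]
    simp only [hAentry]
    have h1 : (∑ σ, (S xb)⁻¹ μ' σ * (E i j σ ν + S xb σ ν * (if i = j then 1 else 0))) =
        ((S xb)⁻¹ * E i j) μ' ν
          + (if i = j then ((1 : Matrix (Fin n) (Fin n) ℂ) μ' ν) else 0) := by
      simp only [mul_add, Finset.sum_add_distrib]
      have e1 : (∑ σ, (S xb)⁻¹ μ' σ * E i j σ ν) = ((S xb)⁻¹ * E i j) μ' ν :=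
        (Matrix.mul_apply).symm
      have e2 : (∑ σ, (S xb)⁻¹ μ' σ * (S xb σ ν * (if i = j then 1 else 0))) =
          if i = j then ((1 : Matrix (Fin n) (Fin n) ℂ) μ' ν) else 0 := by
        by_cases h : i = j
        · subst h
          simp only [eq_self_iff_true, if_true, mul_one]
          rw [← Matrix.mul_apply, Matrix.nonsing_inv_mul _ hdet]
        · simp [h]
      rw [e1, e2]
    rw [h1]
    simp only [Matrix.one_apply, Prod.ext_iff]
    by_cases h : i = j <;> by_cases h2 : μ' = ν <;> simp [h, h2]
  -- nonnegativity and abbreviations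
  have hc0 : ∀ i j, (0:ℝ) ≤ ∫ ξ, (φ i ξ * φ j ξ) ^ 2 ∂ρ := fun i j =>
    integral_nonneg fun ξ => sq_nonneg _
  have hsc0 : (0:ℝ) ≤ ∑ i, ∑ j, ∫ ξ, (φ i ξ * φ j ξ) ^ 2 ∂ρ :=
    Finset.sum_nonneg fun i _ => Finset.sum_nonneg fun j _ => hc0 i j
  have hF2inv0 : (0:ℝ) ≤ ∑ μ', ∑ ν, ‖(S xb)⁻¹ μ' ν‖ ^ 2 :=
    Finset.sum_nonneg fun _ _ => Finset.sum_nonneg fun _ _ => sq_nonneg _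
  -- rewrite the integral of frob² as a sum of integrals
  have habs2int : ∀ (μ' ν : Fin n),
      Integrable (fun ξ => ‖S ξ μ' ν - S xb μ' ν‖ ^ 2) ρ := fun μ' ν => by
    have := ((hΔmem μ' ν).norm).integrable_sq
    simpa using this
  have hD : (∫ ξ, frob (S ξ - S xb) ^ 2 ∂ρ) =
      ∑ μ', ∑ ν, ∫ ξ, ‖S ξ μ' ν - S xb μ' ν‖ ^ 2 ∂ρ := by
    have hfr : ∀ ξ, frob (S ξ - S xb) ^ 2 =
        ∑ μ', ∑ ν, ‖S ξ μ' ν - S xb μ' ν‖ ^ 2 := fun ξ => by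
      rw [frob, Real.sq_sqrt (Finset.sum_nonneg fun _ _ =>
        Finset.sum_nonneg fun _ _ => sq_nonneg _)]
      simp [Matrix.sub_apply]
    simp_rw [hfr]
    rw [integral_finset_sum _ fun μ' _ => integrable_finset_sum _ fun ν _ => habs2int μ' ν]
    exact Finset.sum_congr rfl fun μ' _ => integral_finset_sum _ fun ν _ => habs2int μ' ν
  have hD0 : (0:ℝ) ≤ ∫ ξ, frob (S ξ - S xb) ^ 2 ∂ρ :=
    integral_nonneg fun ξ => sq_nonneg _
  -- bound on each E i j
  have hEbound : ∀ i j, (∑ μ', ∑ ν, ‖E i j μ' ν‖ ^ 2) ≤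
      (∫ ξ, frob (S ξ - S xb) ^ 2 ∂ρ) * (∫ ξ, (φ i ξ * φ j ξ) ^ 2 ∂ρ) := by
    intro i j
    rw [hD, Finset.sum_mul]
    refine Finset.sum_le_sum fun μ' _ => ?_
    rw [Finset.sum_mul]
    refine Finset.sum_le_sum fun ν _ => ?_
    exact aux_cs (hΔmem μ' ν) (hgmem i j)
  -- main computation
  have hfrobeq : frob (Abar⁻¹ * A - 1) =
      Real.sqrt (∑ i, ∑ j, ∑ μ', ∑ ν, ‖((S xb)⁻¹ * E i j) μ' ν‖ ^ 2) := by
    rw [frob]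
    congr 1
    rw [Fintype.sum_prod_type]
    refine Finset.sum_congr rfl fun i _ => ?_
    have hin : ∀ μ' : Fin n,
        (∑ q : Fin (m + 1) × Fin n, ‖(Abar⁻¹ * A - 1) (i, μ') q‖ ^ 2)
          = ∑ j, ∑ ν, ‖((S xb)⁻¹ * E i j) μ' ν‖ ^ 2 := fun μ' => by
      rw [Fintype.sum_prod_type]
      exact Finset.sum_congr rfl fun j _ =>
        Finset.sum_congr rfl fun ν _ => by rw [hMentry]
    simp_rw [hin]
    exact Finset.sum_comm
  have hTbound : (∑ i, ∑ j, ∑ μ', ∑ ν, ‖((S xb)⁻¹ * E i j) μ' ν‖ ^ 2) ≤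
      (∑ μ', ∑ ν, ‖(S xb)⁻¹ μ' ν‖ ^ 2) *
        ((∫ ξ, frob (S ξ - S xb) ^ 2 ∂ρ) * (∑ i, ∑ j, ∫ ξ, (φ i ξ * φ j ξ) ^ 2 ∂ρ)) := by
    calc (∑ i, ∑ j, ∑ μ', ∑ ν, ‖((S xb)⁻¹ * E i j) μ' ν‖ ^ 2)
        ≤ ∑ i, ∑ j, (∑ μ', ∑ ν, ‖(S xb)⁻¹ μ' ν‖ ^ 2) *
            ((∫ ξ, frob (S ξ - S xb) ^ 2 ∂ρ) * (∫ ξ, (φ i ξ * φ j ξ) ^ 2 ∂ρ)) := by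
          refine Finset.sum_le_sum fun i _ => Finset.sum_le_sum fun j _ => ?_
          refine (aux_F2_mul _ _).trans ?_
          exact mul_le_mul_of_nonneg_left (hEbound i j) hF2inv0
      _ = _ := by
          simp only [Finset.mul_sum]
  have key : frob (Abar⁻¹ * A - 1) ≤
      Real.sqrt (∑ i, ∑ j, ∫ ξ, (φ i ξ * φ j ξ) ^ 2 ∂ρ) * frob (S xb)⁻¹ *
        Real.sqrt (∫ ξ, frob (S ξ - S xb) ^ 2 ∂ρ) := by
    rw [hfrobeq]
    refine (Real.sqrt_le_sqrt hTbound).trans (le_of_eq ?_)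
    rw [Real.sqrt_mul hF2inv0, Real.sqrt_mul hD0, frob]
    ring
  refine key.trans ?_
  have h1le : (1:ℝ) ≤ Real.sqrt ((m:ℝ) + 1) := by
    calc (1:ℝ) = Real.sqrt 1 := Real.sqrt_one.symm
      _ ≤ _ := Real.sqrt_le_sqrt (le_add_of_nonneg_left (Nat.cast_nonneg m))
  have hfr0 : (0:ℝ) ≤ frob (S xb)⁻¹ := Real.sqrt_nonneg _
  calc Real.sqrt (∑ i, ∑ j, ∫ ξ, (φ i ξ * φ j ξ) ^ 2 ∂ρ) * frob (S xb)⁻¹ *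
        Real.sqrt (∫ ξ, frob (S ξ - S xb) ^ 2 ∂ρ)
      ≤ (Real.sqrt ((m:ℝ) + 1) * Real.sqrt (∑ i, ∑ j, ∫ ξ, (φ i ξ * φ j ξ) ^ 2 ∂ρ)) *
          frob (S xb)⁻¹ * Real.sqrt (∫ ξ, frob (S ξ - S xb) ^ 2 ∂ρ) := by
        refine mul_le_mul_of_nonneg_right (mul_le_mul_of_nonneg_right ?_ hfr0)
          (Real.sqrt_nonneg _)
        exact le_mul_of_one_le_left (Real.sqrt_nonneg _) h1le
    _ = _ := rfl
end
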